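/- Let f : Λ → Γ be a surjective full map of finite simplicial graphs satisfying condition (*). Then the diagonal homomorphism φ : A(Γ) → A(Λ) (sending each vertex u to the product of vertices in f^{-1}(u)) maps every reduced word in A(Γ) to a reduced word in A(Λ); in particular φ is a quasi-isometric embedding with bi-Lipschitz constant max{ #f^{-1}(u) : u ∈ V(Γ) } with respect to the word metrics on the standard generating sets. -/

import Mathlib

namespace Paper

variable {V : Type*}

/-- Relators of the right-angled Artin group: commutators of adjacent vertices. -/
def raagRels (G : SimpleGraph V) : Set (FreeGroup V) :=
  {r | ∃ u v : V, G.Adj u v ∧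
    r = FreeGroup.of u * FreeGroup.of v * (FreeGroup.of u)⁻¹ * (FreeGroup.of v)⁻¹}

/-- The right-angled Artin group on a simple graph. -/
def RAAG (G : SimpleGraph V) : Type _ :=
  PresentedGroup (raagRels G)

instance (G : SimpleGraph V) : Group (RAAG G) :=
  inferInstanceAs (Group (PresentedGroup (raagRels G)))

/-- The generator of `RAAG G` corresponding to a vertex. -/
def raagOf (G : SimpleGraph V) (v : V) : RAAG G :=
  PresentedGroup.of v

/-- Evaluation of a word (a list of letters, each a vertex with a sign) in `RAAG G`. -/
def raagWord (G : SimpleGraph V) (w : List (V × Bool)) : RAAG G :=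
  (w.map fun p => if p.2 then raagOf G p.1 else (raagOf G p.1)⁻¹).prod

/-- A word is reduced if any word representing the same element is at least as long. -/
def IsReducedWord (G : SimpleGraph V) (w : List (V × Bool)) : Prop :=
  ∀ w' : List (V × Bool), raagWord G w' = raagWord G w → w.length ≤ w'.length

/-- Word length of an element of `RAAG G` with respect to the vertex generating set. -/
noncomputable def raagLength (G : SimpleGraph V) (g : RAAG G) : ℕ :=
  sInf {n | ∃ w : List (V × Bool), raagWord G w = g ∧ w.length = n}

/-! ### Basics -/

section Basics

variable (G : SimpleGraph V)

def gen (p : V × Bool) : RAAG G := if p.2 then raagOf G p.1 else (raagOf G p.1)⁻¹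

lemma raagWord_def (w : List (V × Bool)) : raagWord G w = (w.map (gen G)).prod := rfl

@[simp] lemma raagWord_nil : raagWord G [] = 1 := rfl

lemma raagWord_cons (p : V × Bool) (w : List (V × Bool)) :
    raagWord G (p :: w) = gen G p * raagWord G w := by
  simp [raagWord_def]

lemma raagWord_append (w₁ w₂ : List (V × Bool)) :
    raagWord G (w₁ ++ w₂) = raagWord G w₁ * raagWord G w₂ := by
  simp [raagWord_def]

variable {G}

lemma raagOf_commute {u v : V} (h : G.Adj u v) : Commute (raagOf G u) (raagOf G v) := by
  have hr : (FreeGroup.of u * FreeGroup.of v * (FreeGroup.of u)⁻¹ * (FreeGroup.of v)⁻¹ :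
      FreeGroup V) ∈ Subgroup.normalClosure (raagRels G) :=
    Subgroup.subset_normalClosure ⟨u, v, h, rfl⟩
  have h1 : (PresentedGroup.mk (raagRels G))
      (FreeGroup.of u * FreeGroup.of v * (FreeGroup.of u)⁻¹ * (FreeGroup.of v)⁻¹) = 1 := by
    exact (QuotientGroup.eq_one_iff _).2 hr
  have : raagOf G u * raagOf G v * (raagOf G u)⁻¹ * (raagOf G v)⁻¹ = 1 := by
    have h2 := h1
    simp only [map_mul, map_inv] at h2
    exact h2
  rw [mul_inv_eq_one, mul_inv_eq_iff_eq_mul] at this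
  exact this

lemma gen_commute {p q : V × Bool} (h : G.Adj p.1 q.1) : Commute (gen G p) (gen G q) := by
  obtain ⟨a, ε⟩ := p; obtain ⟨b, δ⟩ := q
  have h0 : Commute (raagOf G a) (raagOf G b) := raagOf_commute h
  cases ε <;> cases δ <;>
      simp only [gen, Bool.false_eq_true, if_false, if_true] <;>
    first
      | exact h0
      | exact h0.inv_left
      | exact h0.inv_right
      | exact h0.inv_left.inv_right

@[simp] lemma gen_mul_gen_not (a : V) (ε : Bool) : gen G (a, ε) * gen G (a, !ε) = 1 := by
  cases ε <;> simp [gen]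

end Basics

/-! ### Cancellation patterns and the elementary move -/

section Cancel

variable (G : SimpleGraph V)

/-- `w` contains a pattern `(a,ε) … (a,!ε)` where everything in between is adjacent to `a`. -/
def HasCancel (w : List (V × Bool)) : Prop :=
  ∃ (a : V) (ε : Bool) (w₁ m w₂ : List (V × Bool)),
    w = w₁ ++ (a, ε) :: (m ++ (a, !ε) :: w₂) ∧ ∀ p ∈ m, G.Adj a p.1

abbrev NoCancel (w : List (V × Bool)) : Prop := ¬ HasCancel G w

/-- A letter `(v,!ε)` can be deleted from the front: all letters before it commute with `v`. -/
def CanDel (v : V) (ε : Bool) (s : List (V × Bool)) : Prop :=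
  ∃ s₁ s₂ : List (V × Bool), s = s₁ ++ (v, !ε) :: s₂ ∧ ∀ p ∈ s₁, G.Adj v p.1

variable {G}

lemma canDel_unique {v : V} {ε : Bool} {s₁ s₂ t₁ t₂ : List (V × Bool)}
    (h : s₁ ++ (v, !ε) :: s₂ = t₁ ++ (v, !ε) :: t₂)
    (h₁ : ∀ p ∈ s₁, G.Adj v p.1) (h₂ : ∀ p ∈ t₁, G.Adj v p.1) :
    s₁ = t₁ ∧ s₂ = t₂ := by
  induction s₁ generalizing t₁ with
  | nil =>
    cases t₁ with
    | nil => simpa using h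
    | cons q t =>
      exfalso
      have hq : q = (v, !ε) := by simpa using (congrArg (fun l => l.head?) h).symm
      have := h₂ q (by simp)
      rw [hq] at this
      exact G.irrefl this
  | cons p s ih =>
    cases t₁ with
    | nil =>
      exfalso
      have hp : p = (v, !ε) := by simpa using congrArg (fun l => l.head?) h
      have := h₁ p (by simp)
      rw [hp] at this
      exact G.irrefl this
    | cons q t =>
      simp only [List.cons_append, List.cons.injEq] at h
      obtain ⟨rfl, h⟩ := h
      obtain ⟨e1, e2⟩ := ih h (fun p hp => h₁ p (by simp [hp])) (fun p hp => h₂ p (by simp [hp]))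
      exact ⟨by rw [e1], e2⟩

open Classical in
/-- Multiply `s` on the left by the letter `(v,ε)`, in "reduced form": either delete a
cancelling occurrence of `(v,!ε)` or prepend `(v,ε)`. -/
noncomputable def pr (G : SimpleGraph V) (v : V) (ε : Bool) (s : List (V × Bool)) :
    List (V × Bool) :=
  if h : CanDel G v ε s then h.choose ++ h.choose_spec.choose else (v, ε) :: s

lemma pr_of_canDel {v : V} {ε : Bool} {s s₁ s₂ : List (V × Bool)}
    (h1 : s = s₁ ++ (v, !ε) :: s₂) (h2 : ∀ p ∈ s₁, G.Adj v p.1) :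
    pr G v ε s = s₁ ++ s₂ := by
  have hc : CanDel G v ε s := ⟨s₁, s₂, h1, h2⟩
  rw [pr, dif_pos hc]
  obtain ⟨ht, ht2⟩ := hc.choose_spec.choose_spec
  obtain ⟨e1, e2⟩ := canDel_unique (ht.symm.trans h1) ht2 h2
  exact congrArg₂ (fun x y => x ++ y) e1 e2

lemma pr_of_not_canDel {v : V} {ε : Bool} {s : List (V × Bool)} (h : ¬ CanDel G v ε s) :
    pr G v ε s = (v, ε) :: s := dif_neg h

lemma pr_length (v : V) (ε : Bool) (s : List (V × Bool)) :
    (pr G v ε s).length ≤ s.length + 1 := by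
  by_cases h : CanDel G v ε s
  · obtain ⟨s₁, s₂, h1, h2⟩ := h
    rw [pr_of_canDel h1 h2, h1]
    simp
    omega
  · rw [pr_of_not_canDel h]
    simp

lemma hasCancel_cons {p : V × Bool} {w : List (V × Bool)} (h : HasCancel G w) :
    HasCancel G (p :: w) := by
  obtain ⟨a, ε, w₁, m, w₂, h1, h2⟩ := h
  exact ⟨a, ε, p :: w₁, m, w₂, by rw [h1]; rfl, h2⟩

lemma noCancel_tail {p : V × Bool} {w : List (V × Bool)} (h : NoCancel G (p :: w)) :
    NoCancel G w := fun hc => h (hasCancel_cons hc)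

lemma noCancel_head_not_canDel {v : V} {ε : Bool} {s : List (V × Bool)}
    (h : NoCancel G ((v, ε) :: s)) : ¬ CanDel G v ε s := by
  rintro ⟨s₁, s₂, h1, h2⟩
  exact h ⟨v, ε, [], s₁, s₂, by rw [h1]; rfl, h2⟩

lemma noCancel_cons {v : V} {ε : Bool} {s : List (V × Bool)} (h : NoCancel G s)
    (hnc : ¬ CanDel G v ε s) : NoCancel G ((v, ε) :: s) := by
  rintro ⟨a, δ, w₁, m, w₂, h1, h2⟩
  cases w₁ with
  | nil =>
    simp only [List.nil_append, List.cons.injEq, Prod.mk.injEq] at h1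
    obtain ⟨⟨rfl, rfl⟩, h1⟩ := h1
    exact hnc ⟨m, w₂, h1, h2⟩
  | cons q w₁' =>
    simp only [List.cons_append, List.cons.injEq] at h1
    exact h ⟨a, δ, w₁', m, w₂, h1.2, h2⟩

/-- Deleting a cancellable letter preserves `NoCancel`. -/
lemma noCancel_del {v : V} {ε : Bool} {s₁ s₂ : List (V × Bool)}
    (h : NoCancel G (s₁ ++ (v, !ε) :: s₂)) (hadj : ∀ p ∈ s₁, G.Adj v p.1) :
    NoCancel G (s₁ ++ s₂) := by
  rintro ⟨a, δ, u₁, m, u₂, h1, h2⟩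
  rcases List.append_eq_append_iff.1 h1 with ⟨k, hk1, hk2⟩ | ⟨k, hk1, hk2⟩
  · -- hk1 : u₁ = s₁ ++ k, hk2 : s₂ = k ++ (a,δ)::(m ++ (a,!δ)::u₂)
    exact h ⟨a, δ, s₁ ++ (v, !ε) :: k, m, u₂, by rw [hk2]; simp, h2⟩
  · -- hk1 : s₁ = u₁ ++ k, hk2 : (a,δ)::(m++(a,!δ)::u₂) = k ++ s₂
    cases k with
    | nil =>
      simp only [List.nil_append] at hk2
      simp only [List.append_nil] at hk1
      exact h ⟨a, δ, u₁ ++ [(v, !ε)], m, u₂, by rw [hk1, ← hk2]; simp, h2⟩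
    | cons q k' =>
      obtain ⟨rfl, hk2'⟩ : (a, δ) = q ∧ m ++ (a, !δ) :: u₂ = k' ++ s₂ := by
        simpa using hk2
      have hva : G.Adj v a := by simpa using hadj (a, δ) (by simp [hk1])
      rcases List.append_eq_append_iff.1 hk2' with ⟨j, hj1, hj2⟩ | ⟨j, hj1, hj2⟩
      · -- hj1 : k' = m ++ j, hj2 : (a,!δ)::u₂ = j ++ s₂
        cases j with
        | nil =>
          simp only [List.nil_append] at hj2
          simp only [List.append_nil] at hj1
          refine h ⟨a, δ, u₁, m ++ [(v, !ε)], u₂, by rw [hk1, hj1, ← hj2]; simp, ?_⟩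
          intro p hp
          rcases List.mem_append.1 hp with hp | hp
          · exact h2 p hp
          · have hpv : p = (v, !ε) := by simpa using hp
            subst hpv; exact hva.symm
        | cons r j' =>
          obtain ⟨rfl, hj2'⟩ : (a, !δ) = r ∧ u₂ = j' ++ s₂ := by simpa using hj2
          exact h ⟨a, δ, u₁, m, j' ++ (v, !ε) :: s₂, by rw [hk1, hj1]; simp, h2⟩
      · -- hj1 : m = k' ++ j, hj2 : s₂ = j ++ (a,!δ)::u₂
        refine h ⟨a, δ, u₁, k' ++ (v, !ε) :: j, u₂, by rw [hk1, hj2]; simp, ?_⟩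
        intro p hp
        simp only [List.mem_append, List.mem_cons] at hp
        rcases hp with hp | hp | hp
        · exact h2 p (by simp [hj1, hp])
        · subst hp; exact hva.symm
        · exact h2 p (by simp [hj1, hp])

lemma noCancel_pr {v : V} {ε : Bool} {s : List (V × Bool)} (h : NoCancel G s) :
    NoCancel G (pr G v ε s) := by
  by_cases hc : CanDel G v ε s
  · obtain ⟨s₁, s₂, h1, h2⟩ := hc
    rw [pr_of_canDel h1 h2]
    exact noCancel_del (h1 ▸ h) h2
  · rw [pr_of_not_canDel hc]
    exact noCancel_cons h hc

end Cancel

/-! ### The swap relation -/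

section Swap

variable (G : SimpleGraph V)

/-- Swapping two adjacent commuting letters. -/
def Swap (w w' : List (V × Bool)) : Prop :=
  ∃ (c : List (V × Bool)) (x y : V × Bool) (d : List (V × Bool)),
    G.Adj x.1 y.1 ∧ w = c ++ x :: y :: d ∧ w' = c ++ y :: x :: d

abbrev SwapEq : List (V × Bool) → List (V × Bool) → Prop := Relation.ReflTransGen (Swap G)

variable {G}

lemma Swap.symm {w w' : List (V × Bool)} (h : Swap G w w') : Swap G w' w := by
  obtain ⟨c, x, y, d, hxy, h1, h2⟩ := h
  exact ⟨c, y, x, d, hxy.symm, h2, h1⟩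

lemma swapEq_of_eq {w w' : List (V × Bool)} (h : w = w') : SwapEq G w w' := h ▸ .refl

lemma swapEq_cons (p : V × Bool) {w w' : List (V × Bool)} (h : SwapEq G w w') :
    SwapEq G (p :: w) (p :: w') := by
  induction h with
  | refl => exact .refl
  | tail _ hstep ih =>
    refine ih.tail ?_
    obtain ⟨c, x, y, d, hxy, h1, h2⟩ := hstep
    exact ⟨p :: c, x, y, d, hxy, by rw [h1]; rfl, by rw [h2]; rfl⟩

lemma swapEq_move {v : V} {s₁ : List (V × Bool)} (hadj : ∀ p ∈ s₁, G.Adj v p.1) (δ : Bool)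
    (s₂ : List (V × Bool)) : SwapEq G ((v, δ) :: (s₁ ++ s₂)) (s₁ ++ (v, δ) :: s₂) := by
  induction s₁ with
  | nil => exact .refl
  | cons q t ih =>
    exact Relation.ReflTransGen.head
      (⟨[], (v, δ), q, t ++ s₂, hadj q (by simp), rfl, rfl⟩ : Swap G _ (q :: (v, δ) :: (t ++ s₂)))
      (swapEq_cons q (ih fun p hp => hadj p (by simp [hp])))

lemma canDel_swap {v : V} {ε : Bool} {c d : List (V × Bool)} {x y : V × Bool}
    (hxy : G.Adj x.1 y.1) (h : CanDel G v ε (c ++ x :: y :: d)) :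
    CanDel G v ε (c ++ y :: x :: d) := by
  obtain ⟨s₁, s₂, heq, hadj⟩ := h
  rcases List.append_eq_append_iff.1 heq.symm with ⟨j, hj1, hj2⟩ | ⟨j, hj1, hj2⟩
  · -- hj1 : c = s₁ ++ j, hj2 : (v,!ε)::s₂ = j ++ x::y::d
    cases j with
    | nil =>
      simp only [List.nil_append] at hj2
      simp only [List.append_nil] at hj1
      have hx : (v, !ε) = x := by simpa using congrArg (fun l => l.head?) hj2
      have hy : G.Adj v y.1 := by
        have : v = x.1 := by rw [← hx]
        rw [this]; exact hxy
      refine ⟨s₁ ++ [y], d, by rw [hj1, ← hx]; simp, ?_⟩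
      intro p hp
      rcases List.mem_append.1 hp with hp | hp
      · exact hadj p hp
      · have : p = y := by simpa using hp
        subst this; exact hy
    | cons z j' =>
      obtain ⟨hz, hj2'⟩ : (v, !ε) = z ∧ s₂ = j' ++ x :: y :: d := by simpa using hj2
      exact ⟨s₁, j' ++ y :: x :: d, by rw [hj1, ← hz]; simp, hadj⟩
  · -- hj1 : s₁ = c ++ j, hj2 : x::y::d = j ++ (v,!ε)::s₂
    cases j with
    | nil =>
      simp only [List.nil_append] at hj2
      simp only [List.append_nil] at hj1
      have hx : x = (v, !ε) := by simpa using congrArg (fun l => l.head?) hj2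
      have hy : G.Adj v y.1 := by
        have : v = x.1 := by rw [hx]
        rw [this]; exact hxy
      refine ⟨c ++ [y], d, by rw [← hx]; simp, ?_⟩
      intro p hp
      rcases List.mem_append.1 hp with hp | hp
      · exact hadj p (by rw [hj1]; simp [hp])
      · have : p = y := by simpa using hp
        subst this; exact hy
    | cons z j2 =>
      obtain ⟨hxz, hj2'⟩ : x = z ∧ y :: d = j2 ++ (v, !ε) :: s₂ := by simpa using hj2
      cases j2 with
      | nil =>
        simp only [List.nil_append] at hj2'
        obtain ⟨hy, hds⟩ : y = (v, !ε) ∧ d = s₂ := by simpa using hj2'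
        refine ⟨c, x :: d, by rw [hy], ?_⟩
        intro p hp
        exact hadj p (by rw [hj1]; simp [hp])
      | cons z2 j3 =>
        obtain ⟨hyz, hdd⟩ : y = z2 ∧ d = j3 ++ (v, !ε) :: s₂ := by simpa using hj2'
        refine ⟨c ++ y :: x :: j3, s₂, by rw [hdd]; simp, ?_⟩
        intro p hp
        refine hadj p ?_
        rw [hj1, ← hxz, ← hyz]
        simp only [List.mem_append, List.mem_cons] at hp ⊢
        tauto

lemma pr_swap_aux {v : V} {ε : Bool} {c d : List (V × Bool)} {x y : V × Bool}
    (hxy : G.Adj x.1 y.1) (h : CanDel G v ε (c ++ x :: y :: d)) :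
    SwapEq G (pr G v ε (c ++ x :: y :: d)) (pr G v ε (c ++ y :: x :: d)) := by
  obtain ⟨s₁, s₂, heq, hadj⟩ := h
  rcases List.append_eq_append_iff.1 heq.symm with ⟨j, hj1, hj2⟩ | ⟨j, hj1, hj2⟩
  · -- hj1 : c = s₁ ++ j, hj2 : (v,!ε)::s₂ = j ++ x::y::d
    cases j with
    | nil =>
      simp only [List.nil_append] at hj2
      simp only [List.append_nil] at hj1
      have hx : (v, !ε) = x := by simpa using congrArg (fun l => l.head?) hj2
      have hs₂ : s₂ = y :: d := by simpa using congrArg (fun l => l.tail) hj2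
      have hy : G.Adj v y.1 := by
        have : v = x.1 := by rw [← hx]
        rw [this]; exact hxy
      have hadj2 : ∀ p ∈ s₁ ++ [y], G.Adj v p.1 := by
        intro p hp
        rcases List.mem_append.1 hp with hp | hp
        · exact hadj p hp
        · have : p = y := by simpa using hp
          subst this; exact hy
      rw [pr_of_canDel heq hadj,
        pr_of_canDel (s₁ := s₁ ++ [y]) (s₂ := d) (by rw [hj1, ← hx]; simp) hadj2]
      exact swapEq_of_eq (by rw [hs₂]; simp)
    | cons z j' =>
      obtain ⟨hz, hs₂⟩ : (v, !ε) = z ∧ s₂ = j' ++ x :: y :: d := by simpa using hj2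
      rw [pr_of_canDel heq hadj,
        pr_of_canDel (s₁ := s₁) (s₂ := j' ++ y :: x :: d) (by rw [hj1, ← hz]; simp) hadj]
      rw [hs₂]
      exact Relation.ReflTransGen.single ⟨s₁ ++ j', x, y, d, hxy, by simp, by simp⟩
  · -- hj1 : s₁ = c ++ j, hj2 : x::y::d = j ++ (v,!ε)::s₂
    cases j with
    | nil =>
      simp only [List.nil_append] at hj2
      simp only [List.append_nil] at hj1
      have hx : x = (v, !ε) := by simpa using congrArg (fun l => l.head?) hj2
      have hs₂ : y :: d = s₂ := by simpa using congrArg (fun l => l.tail) hj2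
      have hy : G.Adj v y.1 := by
        have : v = x.1 := by rw [hx]
        rw [this]; exact hxy
      have hadj2 : ∀ p ∈ c ++ [y], G.Adj v p.1 := by
        intro p hp
        rcases List.mem_append.1 hp with hp | hp
        · exact hadj p (by rw [hj1]; simp [hp])
        · have : p = y := by simpa using hp
          subst this; exact hy
      rw [pr_of_canDel heq hadj,
        pr_of_canDel (s₁ := c ++ [y]) (s₂ := d) (by rw [← hx]; simp) hadj2]
      exact swapEq_of_eq (by rw [hj1, ← hs₂]; simp)
    | cons z j2 =>
      obtain ⟨hxz, hj2'⟩ : x = z ∧ y :: d = j2 ++ (v, !ε) :: s₂ := by simpa using hj2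
      cases j2 with
      | nil =>
        simp only [List.nil_append] at hj2'
        obtain ⟨hy, hds⟩ : y = (v, !ε) ∧ d = s₂ := by simpa using hj2'
        have hadjc : ∀ p ∈ c, G.Adj v p.1 := fun p hp => hadj p (by rw [hj1]; simp [hp])
        rw [pr_of_canDel heq hadj,
          pr_of_canDel (s₁ := c) (s₂ := x :: d) (by rw [hy]) hadjc]
        exact swapEq_of_eq (by rw [hj1, ← hxz, hds]; simp)
      | cons z2 j3 =>
        obtain ⟨hyz, hdd⟩ : y = z2 ∧ d = j3 ++ (v, !ε) :: s₂ := by simpa using hj2'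
        have hadj3 : ∀ p ∈ c ++ y :: x :: j3, G.Adj v p.1 := by
          intro p hp
          refine hadj p ?_
          rw [hj1, ← hxz, ← hyz]
          simp only [List.mem_append, List.mem_cons] at hp ⊢
          tauto
        rw [pr_of_canDel heq hadj,
          pr_of_canDel (s₁ := c ++ y :: x :: j3) (s₂ := s₂) (by rw [hdd]; simp) hadj3]
        refine Relation.ReflTransGen.single ⟨c, x, y, j3 ++ s₂, hxy, ?_, by simp⟩
        rw [hj1, ← hxz, ← hyz]
        simp

lemma pr_swap {v : V} {ε : Bool} {w w' : List (V × Bool)} (h : Swap G w w') :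
    SwapEq G (pr G v ε w) (pr G v ε w') := by
  obtain ⟨c, x, y, d, hxy, rfl, rfl⟩ := h
  by_cases hc : CanDel G v ε (c ++ x :: y :: d)
  · exact pr_swap_aux hxy hc
  · have hc' : ¬ CanDel G v ε (c ++ y :: x :: d) := fun h' => hc (canDel_swap hxy.symm h')
    rw [pr_of_not_canDel hc, pr_of_not_canDel hc']
    exact swapEq_cons _ (Relation.ReflTransGen.single ⟨c, x, y, d, hxy, rfl, rfl⟩)

lemma swapEq_pr {v : V} {ε : Bool} {w w' : List (V × Bool)} (h : SwapEq G w w') :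
    SwapEq G (pr G v ε w) (pr G v ε w') := by
  induction h with
  | refl => exact .refl
  | tail _ hstep ih => exact ih.trans (pr_swap hstep)

/-- Inverse law for `pr`, on words with no cancelling pattern. -/
lemma pr_pr {v : V} {ε : Bool} {s : List (V × Bool)} (h : NoCancel G s) :
    SwapEq G (pr G v (!ε) (pr G v ε s)) s := by
  by_cases hc : CanDel G v ε s
  · obtain ⟨s₁, s₂, heq, hadj⟩ := hc
    subst heq
    rw [pr_of_canDel rfl hadj]
    have hnc : ¬ CanDel G v (!ε) (s₁ ++ s₂) := by
      rintro ⟨t₁, t₂, heq2, hadj'⟩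
      rw [Bool.not_not] at heq2
      rcases List.append_eq_append_iff.1 heq2 with ⟨j, hj1, hj2⟩ | ⟨j, hj1, hj2⟩
      · -- hj1 : t₁ = s₁ ++ j, hj2 : s₂ = j ++ (v,ε)::t₂
        refine h ⟨v, !ε, s₁, j, t₂, by rw [hj2]; simp, ?_⟩
        intro p hp
        exact hadj' p (by simp [hj1, hp])
      · -- hj1 : s₁ = t₁ ++ j, hj2 : (v,ε)::t₂ = j ++ s₂
        cases j with
        | nil =>
          simp only [List.nil_append] at hj2
          simp only [List.append_nil] at hj1
          exact h ⟨v, !ε, s₁, [], t₂, by rw [← hj2]; simp, by simp⟩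
        | cons z j' =>
          have hz : (v, ε) = z := by simpa using congrArg (fun l => l.head?) hj2
          have : G.Adj v v := by
            have := hadj (v, ε) (by rw [hj1, ← hz]; simp)
            simpa using this
          exact G.irrefl this
    rw [pr_of_not_canDel hnc]
    exact swapEq_move hadj (!ε) s₂
  · rw [pr_of_not_canDel hc]
    rw [pr_of_canDel (s₁ := []) (s₂ := s) (by simp) (by simp)]
    exact swapEq_of_eq (by simp)

lemma canDel_cons_iff {v : V} {ε : Bool} {q : V × Bool} {s : List (V × Bool)}
    (h : G.Adj v q.1) : CanDel G v ε (q :: s) ↔ CanDel G v ε s := by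
  constructor
  · rintro ⟨s₁, s₂, heq, hadj⟩
    cases s₁ with
    | nil =>
      exfalso
      have hq : q = (v, !ε) := by simpa using congrArg (fun l => l.head?) heq
      rw [hq] at h
      exact G.irrefl h
    | cons p s₁' =>
      obtain ⟨rfl, heq'⟩ : q = p ∧ s = s₁' ++ (v, !ε) :: s₂ := by simpa using heq
      exact ⟨s₁', s₂, heq', fun p hp => hadj p (by simp [hp])⟩
  · rintro ⟨s₁, s₂, heq, hadj⟩
    refine ⟨q :: s₁, s₂, by rw [heq]; rfl, ?_⟩
    intro p hp
    rcases List.mem_cons.1 hp with hp | hp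
    · subst hp; exact h
    · exact hadj p hp

lemma pr_comm_aux1 {u v : V} {δ ε : Bool} {s : List (V × Bool)} (huv : G.Adj u v)
    (hδ : ¬ CanDel G u δ s) (hε : CanDel G v ε s) :
    pr G u δ (pr G v ε s) = pr G v ε (pr G u δ s) := by
  obtain ⟨s₁, s₂, heq, hadj⟩ := hε
  subst heq
  rw [pr_of_canDel rfl hadj]
  have h1 : ¬ CanDel G u δ (s₁ ++ s₂) := by
    rintro ⟨t₁, t₂, heq2, hadj'⟩
    rcases List.append_eq_append_iff.1 heq2 with ⟨j, hj1, hj2⟩ | ⟨j, hj1, hj2⟩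
    · -- hj1 : t₁ = s₁ ++ j, hj2 : s₂ = j ++ (u,!δ)::t₂
      refine hδ ⟨s₁ ++ (v, !ε) :: j, t₂, by rw [hj2]; simp, ?_⟩
      intro p hp
      simp only [List.mem_append, List.mem_cons] at hp
      rcases hp with hp | hp | hp
      · exact hadj' p (by simp [hj1, hp])
      · subst hp; exact huv
      · exact hadj' p (by simp [hj1, hp])
    · -- hj1 : s₁ = t₁ ++ j, hj2 : (u,!δ)::t₂ = j ++ s₂
      cases j with
      | nil =>
        simp only [List.nil_append] at hj2
        simp only [List.append_nil] at hj1
        refine hδ ⟨s₁ ++ [(v, !ε)], t₂, by rw [← hj2]; simp, ?_⟩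
        intro p hp
        rcases List.mem_append.1 hp with hp | hp
        · exact hadj' p (hj1 ▸ hp)
        · have : p = (v, !ε) := by simpa using hp
          subst this; exact huv
      | cons z j' =>
        obtain ⟨hz, rfl⟩ : (u, !δ) = z ∧ t₂ = j' ++ s₂ := by simpa using hj2
        refine hδ ⟨t₁, j' ++ (v, !ε) :: s₂, by rw [hj1, ← hz]; simp, hadj'⟩
  rw [pr_of_not_canDel h1, pr_of_not_canDel hδ]
  rw [pr_of_canDel (s₁ := (u, δ) :: s₁) (s₂ := s₂) (by simp) ?hadj4]
  · rfl
  case hadj4 =>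
    intro p hp
    rcases List.mem_cons.1 hp with hp | hp
    · subst hp; exact huv.symm
    · exact hadj p hp

lemma pr_comm_aux2 {u v : V} {δ ε : Bool} {s₁ m t₂ : List (V × Bool)} (huv : G.Adj u v)
    (hs₁ : ∀ p ∈ s₁, G.Adj v p.1) (hpre : ∀ p ∈ s₁ ++ (v, !ε) :: m, G.Adj u p.1) :
    pr G u δ (pr G v ε (s₁ ++ (v, !ε) :: (m ++ (u, !δ) :: t₂))) =
      pr G v ε (pr G u δ (s₁ ++ (v, !ε) :: (m ++ (u, !δ) :: t₂))) := by
  have hm : ∀ p ∈ s₁ ++ m, G.Adj u p.1 := by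
    intro p hp
    refine hpre p ?_
    simp only [List.mem_append, List.mem_cons] at hp ⊢
    tauto
  rw [pr_of_canDel (s₁ := s₁) (s₂ := m ++ (u, !δ) :: t₂) rfl hs₁]
  rw [pr_of_canDel (s₁ := s₁ ++ m) (s₂ := t₂) (by simp) hm]
  rw [pr_of_canDel (s₁ := s₁ ++ (v, !ε) :: m) (s₂ := t₂) (by simp) hpre]
  rw [pr_of_canDel (s₁ := s₁) (s₂ := m ++ t₂) (by simp) hs₁]
  simp

lemma pr_comm {u v : V} (huv : G.Adj u v) (δ ε : Bool) (s : List (V × Bool)) :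
    SwapEq G (pr G u δ (pr G v ε s)) (pr G v ε (pr G u δ s)) := by
  have hne : u ≠ v := G.ne_of_adj huv
  by_cases hε : CanDel G v ε s <;> by_cases hδ : CanDel G u δ s
  · -- both
    obtain ⟨s₁, s₂, heq, hadj⟩ := hε
    obtain ⟨t₁, t₂, heq2, hadj'⟩ := hδ
    rw [heq] at heq2
    rcases List.append_eq_append_iff.1 heq2 with ⟨j, hj1, hj2⟩ | ⟨j, hj1, hj2⟩
    · -- hj1 : t₁ = s₁ ++ j, hj2 : (v,!ε)::s₂ = j ++ (u,!δ)::t₂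
      cases j with
      | nil =>
        exfalso
        have : (v, !ε) = ((u, !δ) : V × Bool) := by
          simpa using congrArg (fun l => l.head?) hj2
        exact hne (congrArg Prod.fst this).symm
      | cons z j' =>
        obtain ⟨hz, rfl⟩ : (v, !ε) = z ∧ s₂ = j' ++ (u, !δ) :: t₂ := by simpa using hj2
        subst heq
        refine swapEq_of_eq (pr_comm_aux2 huv hadj ?_)
        intro p hp
        refine hadj' p ?_
        rw [hj1, ← hz]
        exact hp
    · -- hj1 : s₁ = t₁ ++ j, hj2 : (u,!δ)::t₂ = j ++ (v,!ε)::s₂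
      cases j with
      | nil =>
        exfalso
        have : (u, !δ) = ((v, !ε) : V × Bool) := by
          simpa using congrArg (fun l => l.head?) hj2
        exact hne (congrArg Prod.fst this)
      | cons z j' =>
        obtain ⟨hz, rfl⟩ : (u, !δ) = z ∧ t₂ = j' ++ (v, !ε) :: s₂ := by simpa using hj2
        subst heq
        have hs : s₁ ++ (v, !ε) :: s₂ = t₁ ++ (u, !δ) :: (j' ++ (v, !ε) :: s₂) := by
          rw [hj1, ← hz]; simp
        rw [hs]
        refine swapEq_of_eq (pr_comm_aux2 huv.symm hadj' ?_).symm
        intro p hp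
        refine hadj p ?_
        rw [hj1, ← hz]
        exact hp
  · exact swapEq_of_eq (pr_comm_aux1 huv hδ hε)
  · exact swapEq_of_eq (pr_comm_aux1 huv.symm hε hδ).symm
  · -- neither
    have h1 : ¬ CanDel G u δ ((v, ε) :: s) := by
      rw [canDel_cons_iff (by simpa using huv)]
      exact hδ
    have h2 : ¬ CanDel G v ε ((u, δ) :: s) := by
      rw [canDel_cons_iff (by simpa using huv.symm)]
      exact hε
    rw [pr_of_not_canDel hε, pr_of_not_canDel hδ, pr_of_not_canDel h1, pr_of_not_canDel h2]
    exact Relation.ReflTransGen.single ⟨[], (u, δ), (v, ε), s, by simpa using huv, rfl, rfl⟩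

end Swap

/-! ### The piling space and the action of the RAAG -/

section Piling

variable (G : SimpleGraph V)

def PilingSpace : Type _ := Quot (Swap G)

def pmk : List (V × Bool) → PilingSpace G := Quot.mk (Swap G)

variable {G}

lemma pmk_eq_of_swapEq {w w' : List (V × Bool)} (h : SwapEq G w w') : pmk G w = pmk G w' := by
  induction h with
  | refl => rfl
  | tail _ hstep ih => exact ih.trans (Quot.sound hstep)

variable (G)

def plen : PilingSpace G → ℕ :=
  Quot.lift List.length (by rintro w w' ⟨c, x, y, d, _, rfl, rfl⟩; simp)

noncomputable def prQ (v : V) (ε : Bool) : PilingSpace G → PilingSpace G :=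
  Quot.lift (fun w => pmk G (pr G v ε w)) (fun _ _ h => pmk_eq_of_swapEq (pr_swap h))

@[simp] lemma prQ_mk (v : V) (ε : Bool) (w : List (V × Bool)) :
    prQ G v ε (pmk G w) = pmk G (pr G v ε w) := rfl

@[simp] lemma plen_mk (w : List (V × Bool)) : plen G (pmk G w) = w.length := rfl

lemma noCancel_nil : NoCancel G ([] : List (V × Bool)) := by
  rintro ⟨a, ε, w₁, m, w₂, h, -⟩
  have := congrArg List.length h
  simp at this

def Good : PilingSpace G → Prop := fun z => ∃ w, NoCancel G w ∧ pmk G w = z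

def PS : Type _ := {z : PilingSpace G // Good G z}

noncomputable def prS (v : V) (ε : Bool) : PS G → PS G := fun z =>
  ⟨prQ G v ε z.1, by
    obtain ⟨w, hw, hz⟩ := z.2
    exact ⟨pr G v ε w, noCancel_pr hw, by rw [← hz]; rfl⟩⟩

lemma prS_prS_not (v : V) (ε : Bool) (z : PS G) : prS G v (!ε) (prS G v ε z) = z := by
  apply Subtype.ext
  obtain ⟨w, hw, hz⟩ := z.2
  show prQ G v (!ε) (prQ G v ε z.1) = z.1
  rw [← hz]
  exact pmk_eq_of_swapEq (pr_pr hw)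

noncomputable def prPerm (v : V) : Equiv.Perm (PS G) where
  toFun := prS G v true
  invFun := prS G v false
  left_inv := fun z => prS_prS_not G v true z
  right_inv := fun z => prS_prS_not G v false z

lemma prPerm_comm {u v : V} (huv : G.Adj u v) :
    prPerm G u * prPerm G v = prPerm G v * prPerm G u := by
  ext z
  show prS G u true (prS G v true z) = prS G v true (prS G u true z)
  apply Subtype.ext
  obtain ⟨w, hw, hz⟩ := z.2
  show prQ G u true (prQ G v true z.1) = prQ G v true (prQ G u true z.1)
  rw [← hz]
  exact pmk_eq_of_swapEq (pr_comm huv true true w)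

lemma rels_ok : ∀ r ∈ raagRels G, FreeGroup.lift (fun v => prPerm G v) r = 1 := by
  rintro r ⟨u, v, huv, rfl⟩
  simp only [map_mul, map_inv, FreeGroup.lift_apply_of]
  rw [prPerm_comm G huv, mul_inv_cancel_right]
  exact mul_inv_cancel _

noncomputable def pilingHom : RAAG G →* Equiv.Perm (PS G) :=
  PresentedGroup.toGroup (rels_ok G)

lemma pilingHom_of (a : V) : pilingHom G (raagOf G a) = prPerm G a :=
  PresentedGroup.toGroup.of _

lemma pilingHom_gen (p : V × Bool) (z : PS G) :
    pilingHom G (gen G p) z = prS G p.1 p.2 z := by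
  obtain ⟨a, ε⟩ := p
  cases ε
  · have : gen G (a, false) = (raagOf G a)⁻¹ := by simp [gen]
    rw [this, map_inv, pilingHom_of]
    rfl
  · have : gen G (a, true) = raagOf G a := by simp [gen]
    rw [this, pilingHom_of]
    rfl

noncomputable def basePt : PS G := ⟨pmk G [], ⟨[], noCancel_nil G, rfl⟩⟩

noncomputable def lenS (z : PS G) : ℕ := plen G z.1

lemma lenS_prS (v : V) (ε : Bool) (z : PS G) : lenS G (prS G v ε z) ≤ lenS G z + 1 := by
  obtain ⟨w, hw, hz⟩ := z.2
  have h1 : lenS G (prS G v ε z) = plen G (prQ G v ε z.1) := rfl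
  have h2 : lenS G z = plen G z.1 := rfl
  rw [h1, h2, ← hz, prQ_mk, plen_mk, plen_mk]
  exact pr_length v ε w

lemma lenS_action_le (w : List (V × Bool)) (z : PS G) :
    lenS G (pilingHom G (raagWord G w) z) ≤ w.length + lenS G z := by
  induction w generalizing z with
  | nil => simp [raagWord_nil, map_one, lenS]
  | cons p t ih =>
    rw [raagWord_cons, map_mul, Equiv.Perm.mul_apply, pilingHom_gen]
    calc lenS G (prS G p.1 p.2 (pilingHom G (raagWord G t) z))
        ≤ lenS G (pilingHom G (raagWord G t) z) + 1 := lenS_prS G p.1 p.2 _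
      _ ≤ (t.length + lenS G z) + 1 := by have := ih z; omega
      _ = (p :: t).length + lenS G z := by simp; omega

lemma action_of_noCancel {w : List (V × Bool)} (h : NoCancel G w) :
    (pilingHom G (raagWord G w) (basePt G)).1 = pmk G w := by
  induction w with
  | nil => simp [raagWord_nil, map_one, basePt]; rfl
  | cons p t ih =>
    rw [raagWord_cons, map_mul, Equiv.Perm.mul_apply, pilingHom_gen]
    have ht := noCancel_tail h
    have h1 : (pilingHom G (raagWord G t) (basePt G)) =
        ⟨pmk G t, ⟨t, ht, rfl⟩⟩ := Subtype.ext (ih ht)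
    rw [h1]
    show prQ G p.1 p.2 (pmk G t) = pmk G (p :: t)
    rw [prQ_mk]
    have hnc : ¬ CanDel G p.1 p.2 t := by
      have := noCancel_head_not_canDel (G := G) (v := p.1) (ε := p.2) (s := t)
      exact this (by simpa using h)
    rw [pr_of_not_canDel hnc]

theorem noCancel_isReduced {w : List (V × Bool)} (h : NoCancel G w) : IsReducedWord G w := by
  intro w' hw'
  have h1 := lenS_action_le G w' (basePt G)
  rw [hw'] at h1
  have h2 : lenS G (pilingHom G (raagWord G w) (basePt G)) = w.length := by
    show plen G _ = _
    rw [action_of_noCancel G h, plen_mk]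
  have h3 : lenS G (basePt G) = 0 := rfl
  omega

theorem isReduced_noCancel {w : List (V × Bool)} (h : IsReducedWord G w) : NoCancel G w := by
  rintro ⟨a, ε, w₁, m, w₂, heq, hm⟩
  have hcomm : Commute (gen G (a, ε)) (raagWord G m) := by
    apply Commute.list_prod_right
    intro x hx
    simp only [List.mem_map] at hx
    obtain ⟨q, hq, rfl⟩ := hx
    exact gen_commute (p := (a, ε)) (q := q) (hm q hq)
  have hval : raagWord G (w₁ ++ m ++ w₂) = raagWord G w := by
    rw [heq]
    have e1 : gen G (a, ε) * (raagWord G m * (gen G (a, !ε) * raagWord G w₂)) =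
        raagWord G m * raagWord G w₂ := by
      rw [← mul_assoc, hcomm.eq, mul_assoc,
        ← mul_assoc (gen G (a, ε)) (gen G (a, !ε)), gen_mul_gen_not, one_mul]
    simp only [raagWord_append, raagWord_cons, List.append_assoc]
    rw [e1]
  have := h _ hval
  rw [heq] at this
  simp at this

end Piling

/-! ### Words and lengths -/

section Lengths

variable (G : SimpleGraph V)

lemma gen_inv (p : V × Bool) : gen G (p.1, !p.2) = (gen G p)⁻¹ := by
  obtain ⟨a, ε⟩ := p
  cases ε <;> simp [gen]

lemma raagWord_invWord (w : List (V × Bool)) :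
    raagWord G (w.reverse.map fun p => (p.1, !p.2)) = (raagWord G w)⁻¹ := by
  induction w with
  | nil => simp
  | cons p t ih =>
    rw [raagWord_cons, mul_inv_rev]
    simp only [List.reverse_cons, List.map_append, List.map_cons, List.map_nil]
    rw [raagWord_append, ih, raagWord_cons, raagWord_nil, mul_one, gen_inv]

lemma exists_word (g : RAAG G) : ∃ w : List (V × Bool), raagWord G w = g := by
  have hg : g ∈ Subgroup.closure (Set.range (raagOf G)) := by
    have h := PresentedGroup.closure_range_of (raagRels G)
    have : Set.range (raagOf G) = Set.range (PresentedGroup.of (rels := raagRels G)) := rfl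
    rw [this]
    have hg' : g ∈ Subgroup.closure (Set.range (PresentedGroup.of (rels := raagRels G))) := by
      rw [h]; trivial
    exact hg'
  induction hg using Subgroup.closure_induction with
  | mem x hx =>
    obtain ⟨v, rfl⟩ := hx
    exact ⟨[(v, true)], by simp [raagWord_cons, gen]⟩
  | one => exact ⟨[], rfl⟩
  | mul x y hx hy ihx ihy =>
    obtain ⟨wx, hwx⟩ := ihx
    obtain ⟨wy, hwy⟩ := ihy
    exact ⟨wx ++ wy, by rw [raagWord_append, hwx, hwy]⟩
  | inv x hx ihx =>
    obtain ⟨wx, hwx⟩ := ihx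
    exact ⟨wx.reverse.map fun p => (p.1, !p.2), by rw [raagWord_invWord, hwx]⟩

lemma raagLength_le {w : List (V × Bool)} {g : RAAG G} (h : raagWord G w = g) :
    raagLength G g ≤ w.length := Nat.sInf_le ⟨w, h, rfl⟩

lemma exists_reduced_word (g : RAAG G) :
    ∃ w : List (V × Bool), raagWord G w = g ∧ w.length = raagLength G g ∧ IsReducedWord G w := by
  have hne : {n | ∃ w : List (V × Bool), raagWord G w = g ∧ w.length = n}.Nonempty := by
    obtain ⟨w, hw⟩ := exists_word G g
    exact ⟨w.length, w, hw, rfl⟩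
  obtain ⟨w, hw, hlen⟩ := Nat.sInf_mem hne
  refine ⟨w, hw, hlen, ?_⟩
  intro w' hw'
  have h1 : raagLength G g ≤ w'.length := raagLength_le G (hw'.trans hw)
  have h2 : raagLength G g =
      sInf {n | ∃ w : List (V × Bool), raagWord G w = g ∧ w.length = n} := rfl
  omega

lemma isReduced_length {w : List (V × Bool)} (h : IsReducedWord G w) :
    raagLength G (raagWord G w) = w.length := by
  refine le_antisymm (raagLength_le G rfl) ?_
  obtain ⟨w'', hw'', hlen'', _⟩ := exists_reduced_word G (raagWord G w)
  have := h w'' hw''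
  omega

lemma raagWord_map_true (l : List V) :
    raagWord G (l.map fun v => (v, true)) = (l.map (raagOf G)).prod := by
  induction l with
  | nil => simp
  | cons v t ih => rw [List.map_cons, raagWord_cons, List.map_cons, List.prod_cons, ih]; rfl

lemma raagWord_map_false_reverse (l : List V) :
    raagWord G (l.reverse.map fun v => (v, false)) = ((l.map (raagOf G)).prod)⁻¹ := by
  induction l with
  | nil => simp
  | cons v t ih =>
    rw [List.reverse_cons, List.map_append, raagWord_append, ih]
    simp [raagWord_cons, gen, mul_inv_rev]

end Lengths

/-! ### Transfer of cancellation patterns along the diagonal map -/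

section Transfer

variable {VΛ VΓ : Type*} {Λ : SimpleGraph VΛ} {Γ : SimpleGraph VΓ} {f : VΛ → VΓ}
variable {B : VΓ × Bool → List (VΛ × Bool)}

lemma chase (hmap : ∀ a b, Λ.Adj a b → Γ.Adj (f a) (f b))
    (hB1 : ∀ p q, q ∈ B p → f q.1 = p.1 ∧ q.2 = p.2) (hB2 : ∀ p, B p ≠ []) :
    ∀ (t : List (VΓ × Bool)) (M : List (VΛ × Bool)) (a : VΛ) (ε : Bool)
      (W₂ : List (VΛ × Bool)), (∀ q ∈ M, Λ.Adj a q.1) →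
      M ++ (a, !ε) :: W₂ = t.flatMap B →
      ∃ m t₂, t = m ++ (f a, !ε) :: t₂ ∧ ∀ r ∈ m, Γ.Adj (f a) r.1 := by
  intro t
  induction t with
  | nil =>
    intro M a ε W₂ _ h
    exfalso; have := congrArg List.length h; simp at h
  | cons q t' ih =>
    intro M a ε W₂ hM h
    rw [List.flatMap_cons] at h
    have hadjq : (∀ e ∈ B q, e ∈ M) → Γ.Adj (f a) q.1 := by
      intro hsub
      obtain ⟨e, he⟩ := List.exists_mem_of_ne_nil _ (hB2 q)
      have h1 := hM e (hsub e he)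
      have h2 := hmap a e.1 h1
      rwa [(hB1 q e he).1] at h2
    rcases List.append_eq_append_iff.1 h with ⟨j, hj1, hj2⟩ | ⟨j, hj1, hj2⟩
    · -- hj1 : B q = M ++ j, hj2 : (a,!ε)::W₂ = j ++ flat t'
      cases j with
      | nil =>
        simp only [List.nil_append] at hj2
        simp only [List.append_nil] at hj1
        have hq : Γ.Adj (f a) q.1 := hadjq (fun e he => by rw [← hj1]; exact he)
        obtain ⟨m', t₂, ht', hm'⟩ := ih [] a ε W₂ (by simp) (by simpa using hj2)
        refine ⟨q :: m', t₂, by rw [ht']; rfl, ?_⟩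
        intro r hr
        rcases List.mem_cons.1 hr with hr | hr
        · subst hr; exact hq
        · exact hm' r hr
      | cons r j' =>
        have hr : (a, !ε) = r := by simpa using congrArg (fun l => l.head?) hj2
        have hrB : r ∈ B q := by rw [hj1]; simp
        obtain ⟨h1, h2⟩ := hB1 q r hrB
        rw [← hr] at h1 h2
        have hq : q = (f a, !ε) := by
          obtain ⟨q1, q2⟩ := q
          simp only at h1 h2
          rw [← h1, ← h2]
        exact ⟨[], t', by rw [hq]; rfl, by simp⟩
    · -- hj1 : M = B q ++ j, hj2 : flat t' = j ++ (a,!ε)::W₂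
      have hq : Γ.Adj (f a) q.1 := hadjq (fun e he => by rw [hj1]; simp [he])
      obtain ⟨m', t₂, ht', hm'⟩ :=
        ih j a ε W₂ (fun p hp => hM p (by rw [hj1]; simp [hp])) hj2.symm
      refine ⟨q :: m', t₂, by rw [ht']; rfl, ?_⟩
      intro r hr
      rcases List.mem_cons.1 hr with hr | hr
      · subst hr; exact hq
      · exact hm' r hr

lemma transfer (hmap : ∀ a b, Λ.Adj a b → Γ.Adj (f a) (f b))
    (hB1 : ∀ p q, q ∈ B p → f q.1 = p.1 ∧ q.2 = p.2) (hB2 : ∀ p, B p ≠ []) :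
    ∀ w : List (VΓ × Bool), HasCancel Λ (w.flatMap B) → HasCancel Γ w := by
  intro w
  induction w with
  | nil =>
    rintro ⟨a, ε, w₁, m, w₂, h, -⟩
    exfalso; have := congrArg List.length h; simp at this
  | cons p t ih =>
    rintro ⟨a, ε, W₁, M, W₂, heq, hM⟩
    rw [List.flatMap_cons] at heq
    rcases List.append_eq_append_iff.1 heq with ⟨j, hj1, hj2⟩ | ⟨j, hj1, hj2⟩
    · -- hj1 : W₁ = B p ++ j, hj2 : flat t = j ++ pattern
      exact hasCancel_cons (ih ⟨a, ε, j, M, W₂, hj2, hM⟩)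
    · -- hj1 : B p = W₁ ++ j, hj2 : (a,ε)::(M ++ (a,!ε)::W₂) = j ++ flat t
      cases j with
      | nil =>
        simp only [List.nil_append] at hj2
        exact hasCancel_cons (ih ⟨a, ε, [], M, W₂, hj2.symm, hM⟩)
      | cons r j' =>
        have hr : (a, ε) = r := by simpa using congrArg (fun l => l.head?) hj2
        have hrB : r ∈ B p := by rw [hj1]; simp
        obtain ⟨hfa, hε⟩ := hB1 p r hrB
        rw [← hr] at hfa hε
        simp only at hfa hε
        have htail : M ++ (a, !ε) :: W₂ = j' ++ t.flatMap B := by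
          simpa using congrArg (fun l => l.tail) hj2
        cases j' with
        | cons r2 j'' =>
          exfalso
          have hr2B : r2 ∈ B p := by rw [hj1, ← hr]; simp
          obtain ⟨hf2, hs2⟩ := hB1 p r2 hr2B
          cases M with
          | nil =>
            have h3 : (a, !ε) = r2 := by simpa using congrArg (fun l => l.head?) htail
            have h5 : r2.2 = ε := hs2.trans hε.symm
            rw [← h3] at h5
            simp at h5
          | cons m0 M' =>
            have h3 : m0 = r2 := by simpa using congrArg (fun l => l.head?) htail
            have h4 := hmap a m0.1 (hM m0 (by simp))
            rw [hfa, h3, hf2] at h4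
            exact Γ.irrefl h4
        | nil =>
          simp only [List.nil_append] at htail
          obtain ⟨m, t₂, ht, hm⟩ := chase hmap hB1 hB2 t M a ε W₂ hM htail
          have hp : p = (f a, ε) := by
            obtain ⟨p1, p2⟩ := p
            simp only at hfa hε
            rw [← hfa, ← hε]
          exact ⟨f a, ε, [], m, t₂, by rw [hp, ht]; rfl, hm⟩

end Transfer

/-- The diagonal homomorphism induced by a surjective full map with
condition (*) sends reduced words to reduced words, and is a bi-Lipschitz
(quasi-isometric) embedding with constant the maximal fiber size. -/
theorem diagonal_embedding_raag_reduced_and_qi {VΛ VΓ : Type*} [Fintype VΛ] [Fintype VΓ]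
    (Λ : SimpleGraph VΛ) (Γ : SimpleGraph VΓ) (f : VΛ → VΓ)
    (hmap : ∀ a b, Λ.Adj a b → Γ.Adj (f a) (f b))
    (hsurj : Function.Surjective f)
    (hfull : ∀ u₁ u₂, Γ.Adj u₁ u₂ → ∀ v₁ v₂, f v₁ = u₁ → f v₂ = u₂ → Λ.Adj v₁ v₂)
    (hstar : ∀ u u', u ≠ u' → ¬ Γ.Adj u u' →
      ∀ v, f v = u → ∃ v', f v' = u' ∧ ¬ Λ.Adj v v')
    (fib : VΓ → List VΛ) (hnodup : ∀ u, (fib u).Nodup)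
    (hmem : ∀ u v, v ∈ fib u ↔ f v = u)
    (L : ℕ) (hL : L = Finset.univ.sup fun u : VΓ => (fib u).length) :
    ∃ φ : RAAG Γ →* RAAG Λ,
      (∀ u, φ (raagOf Γ u) = ((fib u).map (raagOf Λ)).prod) ∧
      (∀ w : List (VΓ × Bool), IsReducedWord Γ w →
        IsReducedWord Λ (w.flatMap fun p =>
          if p.2 then (fib p.1).map (fun v => (v, true))
          else ((fib p.1).reverse).map (fun v => (v, false)))) ∧
      (∀ g : RAAG Γ, raagLength Γ g ≤ raagLength Λ (φ g) ∧
        raagLength Λ (φ g) ≤ L * raagLength Γ g) := by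
  classical
  set B : VΓ × Bool → List (VΛ × Bool) := fun p =>
    if p.2 then (fib p.1).map (fun v => (v, true))
    else ((fib p.1).reverse).map (fun v => (v, false)) with hBdef
  have hB1 : ∀ p q, q ∈ B p → f q.1 = p.1 ∧ q.2 = p.2 := by
    rintro ⟨u, ε⟩ q hq
    simp only [hBdef] at hq
    cases ε <;> simp at hq <;> obtain ⟨v, hv, rfl⟩ := hq <;>
      exact ⟨(hmem u v).1 hv, rfl⟩
  have hfibne : ∀ u, fib u ≠ [] := by
    intro u
    obtain ⟨v, hv⟩ := hsurj u
    exact List.ne_nil_of_mem ((hmem u v).2 hv)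
  have hB2 : ∀ p, B p ≠ [] := by
    rintro ⟨u, ε⟩
    cases ε <;> simp [hBdef, hfibne u]
  have hBlen : ∀ p, (B p).length = (fib p.1).length := by
    rintro ⟨u, ε⟩
    cases ε <;> simp [hBdef]
  have hLle : ∀ u, (fib u).length ≤ L := by
    intro u
    rw [hL]
    exact Finset.le_sup (f := fun u : VΓ => (fib u).length) (Finset.mem_univ u)
  have hpos : ∀ u : VΓ, 1 ≤ (fib u).length := fun u => List.length_pos_iff.2 (hfibne u)
  have hflat_len : ∀ w : List (VΓ × Bool),
      w.length ≤ (w.flatMap B).length ∧ (w.flatMap B).length ≤ L * w.length := by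
    intro w
    induction w with
    | nil => simp
    | cons p t ih =>
      rw [List.flatMap_cons, List.length_append, List.length_cons]
      have h1 := hBlen p
      have h2 := hLle p.1
      have h3 := hpos p.1
      have h4 : L * (t.length + 1) = L * t.length + L := by ring
      obtain ⟨ih1, ih2⟩ := ih
      constructor
      · omega
      · omega
  set f0 : VΓ → RAAG Λ := fun u => ((fib u).map (raagOf Λ)).prod with hf0
  have hrels : ∀ r ∈ raagRels Γ, FreeGroup.lift f0 r = 1 := by
    rintro r ⟨u, u', huu', rfl⟩
    have hcomm : f0 u * f0 u' = f0 u' * f0 u := by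
      have hc : Commute (f0 u) (f0 u') := by
        apply Commute.list_prod_right
        intro x hx
        apply Commute.list_prod_left
        intro y hy
        simp only [List.mem_map] at hx hy
        obtain ⟨v₂, hv₂, rfl⟩ := hx
        obtain ⟨v₁, hv₁, rfl⟩ := hy
        exact raagOf_commute (hfull u u' huu' v₁ v₂ ((hmem _ _).1 hv₁) ((hmem _ _).1 hv₂))
      exact hc
    simp only [map_mul, map_inv, FreeGroup.lift_apply_of]
    rw [hcomm, mul_inv_cancel_right]
    exact mul_inv_cancel _
  set φ : RAAG Γ →* RAAG Λ := PresentedGroup.toGroup hrels with hφdef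
  refine ⟨φ, ?_, ?_, ?_⟩
  · intro u
    exact PresentedGroup.toGroup.of hrels
  · intro w hw
    exact noCancel_isReduced Λ (fun hc => (isReduced_noCancel Γ hw) (transfer hmap hB1 hB2 w hc))
  · have hφof : ∀ u, φ (raagOf Γ u) = f0 u :=
      fun u => PresentedGroup.toGroup.of hrels
    have hword : ∀ w : List (VΓ × Bool),
        raagWord Λ (w.flatMap B) = φ (raagWord Γ w) := by
      intro w
      induction w with
      | nil => simp [map_one]
      | cons p t ih =>
        rw [List.flatMap_cons, raagWord_append, ih, raagWord_cons, map_mul]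
        congr 1
        obtain ⟨u, ε⟩ := p
        cases ε
        · have h1 : gen Γ (u, false) = (raagOf Γ u)⁻¹ := by simp [gen]
          have h2 : B (u, false) = (fib u).reverse.map (fun v => (v, false)) := by
            simp [hBdef]
          rw [h1, map_inv, hφof, h2, hf0]
          exact raagWord_map_false_reverse Λ (fib u)
        · have h1 : gen Γ (u, true) = raagOf Γ u := by simp [gen]
          have h2 : B (u, true) = (fib u).map (fun v => (v, true)) := by simp [hBdef]
          rw [h1, hφof, h2, hf0]
          exact raagWord_map_true Λ (fib u)
    intro g
    obtain ⟨w, hw, hlen, hred⟩ := exists_reduced_word Γ g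
    have hflat : raagWord Λ (w.flatMap B) = φ g := by
      rw [hword w, hw]
    have hncw : NoCancel Γ w := isReduced_noCancel Γ hred
    have hnc : NoCancel Λ (w.flatMap B) := fun hc => hncw (transfer hmap hB1 hB2 w hc)
    have hredflat : IsReducedWord Λ (w.flatMap B) := noCancel_isReduced Λ hnc
    have h1 : raagLength Λ (φ g) = (w.flatMap B).length := by
      rw [← hflat]
      exact isReduced_length Λ hredflat
    obtain ⟨h2a, h2b⟩ := hflat_len w
    have h3 : raagLength Γ g = w.length := hlen.symm
    rw [h1, h3]
    exact ⟨h2a, h2b⟩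


end Paper
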